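/- Let A ∈ SL(2,ℤ) be a matrix with |trace(A)| > 2, and let Γ = ℤ² ⋊_A ℤ be the semidirect product of ℤ² by ℤ in which the generator 1 ∈ ℤ acts on ℤ² by the automorphism v ↦ Av (so k ∈ ℤ acts by v ↦ A^k v). Then Γ has Grossman's Property A: every class-preserving automorphism of Γ is inner. -/

import Mathlib

/-- A group `G` has Grossman's Property A if every class-preserving automorphism
(i.e. one sending each element to a conjugate of itself) is inner. -/
def HasPropertyA (G : Type*) [Group G] : Prop :=
  ∀ φ : G ≃* G, (∀ g : G, IsConj g (φ g)) → ∃ h : G, ∀ g : G, φ g = h * g * h⁻¹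

/-- The action of `ℤ` on `ℤ²` in which `k ∈ ℤ` acts by `v ↦ A^k v`,
for `A ∈ SL(2,ℤ)`. -/
def matrixAction (A : Matrix.SpecialLinearGroup (Fin 2) ℤ) :
    Multiplicative ℤ →* MulAut (Multiplicative (Fin 2 → ℤ)) :=
  zpowersHom (MulAut (Multiplicative (Fin 2 → ℤ)))
    (AddEquiv.toMultiplicative (Matrix.SpecialLinearGroup.toLin' A).toAddEquiv)

/-!
A class-preserving automorphism `ψ` of `ℤ² ⋊_A ℤ`, composed with a suitable inner one, fixes the
generator `t` of `ℤ`; it then fixes the whole `ℤ` factor, maps `ℤ²` to itself, and its restriction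
`σ` to `ℤ²` commutes with `A`. Class preservation gives `σ e₁ = Aᵃ e₁` for some `a`. Since
`|tr A| > 2` forces `A₁₀ ≠ 0`, the vectors `e₁` and `A e₁` span a sublattice of finite index, on
which the two `A`-equivariant maps `σ` and `Aᵃ` agree; as `ℤ²` is torsion-free, `σ = Aᵃ`, so `ψ` is
conjugation by `tᵃ`.
-/

open SemidirectProduct Multiplicative

theorem HasPropertyA.of_forall_fixing {G : Type*} [Group G] (t : G)
    (h : ∀ ψ : G ≃* G, (∀ g, IsConj g (ψ g)) → ψ t = t →
      ∃ k : G, ∀ g, ψ g = k * g * k⁻¹) :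
    HasPropertyA G := by
  intro φ hφ
  obtain ⟨c, hc⟩ := isConj_iff.1 (hφ t)
  let ψ : G ≃* G := φ.trans (MulAut.conj c⁻¹)
  have hψ (g : G) : ψ g = c⁻¹ * φ g * c := by simp [ψ]
  obtain ⟨k, hk⟩ := h ψ
    (fun g ↦ (hφ g).trans (isConj_iff.2 ⟨c⁻¹, by rw [hψ, inv_inv]⟩))
    (by rw [hψ, ← hc]; group)
  refine ⟨c * k, fun g ↦ ?_⟩
  calc φ g = c * ψ g * c⁻¹ := by rw [hψ]; group
    _ = c * k * g * (c * k)⁻¹ := by rw [hk]; group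

theorem MonoidHom.eq_of_commute_of_pow_mem_closure_pair {M : Type*} [CommGroup M]
    [IsMulTorsionFree M] {f g T : M →* M} {e : M} {n : ℤ} (hn : n ≠ 0)
    (hspan : ∀ v, v ^ n ∈ Subgroup.closure {e, T e})
    (hf : ∀ v, f (T v) = T (f v)) (hg : ∀ v, g (T v) = T (g v)) (he : f e = g e) :
    f = g := by
  have hle : Subgroup.closure {e, T e} ≤ f.eqLocus g := by
    rw [Subgroup.closure_le]
    rintro _ (rfl | rfl)
    · exact he
    · show f (T e) = g (T e)
      rw [hf, hg, he]
  ext v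
  have hv : f (v ^ n) = g (v ^ n) := hle (hspan v)
  rw [map_zpow, map_zpow] at hv
  exact zpow_left_injective hn hv

namespace SemidirectProduct

variable {N G : Type*}

section

variable [Group N] [Group G] {φ : G →* MulAut N}

theorem exists_monoidHom_inl_eq (ψ : N ⋊[φ] G ≃* N ⋊[φ] G)
    (hψ : ∀ v, ∃ w, ψ (inl v) = inl w) :
    ∃ σ : N →* N, ∀ v, ψ (inl v) = inl (σ v) := by
  let ψN : N →* (inl : N →* N ⋊[φ] G).range :=
    (ψ.toMonoidHom.comp inl).codRestrict _ fun v ↦ (hψ v).imp fun _ hw ↦ hw.symm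
  exact ⟨(MonoidHom.ofInjective inl_injective).symm.toMonoidHom.comp ψN, fun v ↦
    (MonoidHom.apply_ofInjective_symm inl_injective (ψN v)).symm⟩

end

section

variable [CommGroup N] [Group G] {φ : G →* MulAut N}

theorem conj_inl (c : N ⋊[φ] G) (v : N) :
    c * inl v * c⁻¹ = inl (φ c.right v) :=
  calc c * inl v * c⁻¹
      = inl c.left * (inr c.right * inl v * inr c.right⁻¹) * (inl c.left)⁻¹ := by
        conv_lhs => rw [← inl_left_mul_inr_right c]
        rw [map_inv]; group
    _ = inl (c.left * φ c.right v * c.left⁻¹) := by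
        rw [← inl_aut, ← map_inv, ← map_mul, ← map_mul]
    _ = inl (φ c.right v) := by rw [mul_comm c.left, mul_inv_cancel_right]

theorem exists_eq_inl_aut_of_isConj {v : N} {x : N ⋊[φ] G} (h : IsConj (inl v) x) : ∃ g, x = inl (φ g v) := by
  obtain ⟨c, rfl⟩ := isConj_iff.1 h
  exact ⟨c.right, conj_inl c v⟩

end

theorem eq_conj_inr_of_map_inl_of_map_inr [Group N] [CommGroup G] {φ : G →* MulAut N}
    (ψ : N ⋊[φ] G ≃* N ⋊[φ] G) (g : G) (hl : ∀ v, ψ (inl v) = inl (φ g v))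
    (hr : ∀ k, ψ (inr k) = inr k) (x : N ⋊[φ] G) : ψ x = inr g * x * (inr g)⁻¹ := by
  have : ψ.toMonoidHom = (MulAut.conj (inr g : N ⋊[φ] G)).toMonoidHom :=
    hom_ext (MonoidHom.ext fun v ↦ by simp [hl, inl_aut])
      (MonoidHom.ext fun k ↦ by simp [hr, ← map_mul, ← map_inv, mul_comm g])
  exact DFunLike.congr_fun this x

theorem hasPropertyA_of_pow_mem_closure_pair [CommGroup N] [IsMulTorsionFree N] (φ : Multiplicative ℤ →* MulAut N) (e : N) {n : ℤ} (hn : n ≠ 0)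
    (hspan : ∀ v, v ^ n ∈ Subgroup.closure {e, φ (ofAdd 1) e}) :
    HasPropertyA (N ⋊[φ] Multiplicative ℤ) := by
  refine HasPropertyA.of_forall_fixing (inr (ofAdd 1)) fun ψ hψ ht ↦ ?_
  have hr (k : Multiplicative ℤ) : ψ (inr k) = inr k :=
    DFunLike.congr_fun (MonoidHom.ext_mint (f := ψ.toMonoidHom.comp inr) (g := inr) ht) k
  obtain ⟨σ, hσ⟩ := exists_monoidHom_inl_eq ψ fun v ↦
    (exists_eq_inl_aut_of_isConj (hψ (inl v))).elim fun _ h ↦ ⟨_, h⟩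
  obtain ⟨g, hg⟩ := exists_eq_inl_aut_of_isConj (hσ e ▸ hψ (inl e))
  have hσφ (v : N) : σ (φ (ofAdd 1) v) = φ (ofAdd 1) (σ v) := by
    apply inl_injective (φ := φ)
    rw [← hσ, inl_aut, map_mul, map_mul, hr, hr, hσ, inl_aut]
  have hφg (v : N) : φ g (φ (ofAdd 1) v) = φ (ofAdd 1) (φ g v) := by
    rw [← MulAut.mul_apply, ← map_mul, mul_comm, map_mul, MulAut.mul_apply]
  have hσg : σ = (φ g).toMonoidHom :=
    MonoidHom.eq_of_commute_of_pow_mem_closure_pair (T := (φ (ofAdd 1)).toMonoidHom) hn hspan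
      hσφ hφg (inl_injective hg)
  exact ⟨inr g, eq_conj_inr_of_map_inl_of_map_inr ψ g (fun v ↦ by rw [hσ, hσg]; rfl) hr⟩

end SemidirectProduct

theorem Matrix.SpecialLinearGroup.apply_one_zero_ne_zero_of_two_lt_abs_trace
    (A : Matrix.SpecialLinearGroup (Fin 2) ℤ)
    (hA : 2 < |Matrix.trace (A : Matrix (Fin 2) (Fin 2) ℤ)|) :
    (A : Matrix (Fin 2) (Fin 2) ℤ) 1 0 ≠ 0 := by
  intro h
  have hdet := A.det_coe
  rw [Matrix.det_fin_two, h, mul_zero, sub_zero] at hdet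
  rw [Matrix.trace_fin_two] at hA
  rcases Int.eq_one_or_neg_one_of_mul_eq_one' hdet with ⟨h0, h1⟩ | ⟨h0, h1⟩ <;>
    simp [h0, h1] at hA

theorem Matrix.apply_one_zero_smul_eq {R : Type*} [CommRing R] (M : Matrix (Fin 2) (Fin 2) R)
    (v : Fin 2 → R) :
    M 1 0 • v = (M 1 0 * v 0 - M 0 0 * v 1) • ![1, 0] + v 1 • M.mulVec ![1, 0] := by
  ext i
  fin_cases i <;> simp <;> ring

theorem matrixAction_ofAdd_one_apply (A : Matrix.SpecialLinearGroup (Fin 2) ℤ)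
    (v : Fin 2 → ℤ) :
    matrixAction A (ofAdd 1) (ofAdd v) = ofAdd ((A : Matrix (Fin 2) (Fin 2) ℤ).mulVec v) := by
  simp only [matrixAction, zpowersHom_apply, toAdd_ofAdd, zpow_one]
  exact congrArg ofAdd (Matrix.SpecialLinearGroup.toLin'_apply A v)

theorem anosovBundle_propertyA (A : Matrix.SpecialLinearGroup (Fin 2) ℤ)
    (hA : 2 < |Matrix.trace (A : Matrix (Fin 2) (Fin 2) ℤ)|) :
    HasPropertyA (Multiplicative (Fin 2 → ℤ) ⋊[matrixAction A] Multiplicative ℤ) :=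
  hasPropertyA_of_pow_mem_closure_pair (matrixAction A) (ofAdd ![1, 0])
    (A.apply_one_zero_ne_zero_of_two_lt_abs_trace hA) fun v ↦ Subgroup.mem_closure_pair.2
      ⟨_, _, by
        rw [matrixAction_ofAdd_one_apply, ← ofAdd_zsmul, ← ofAdd_zsmul, ← ofAdd_add,
          ← Matrix.apply_one_zero_smul_eq]
        rfl⟩
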